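/- The maximum coherent ergotropy at fixed mean energy E equals E - ε_min - E_min(E): max over ρ with Tr[ρH]=E of (E(ρ) - E(Δ(ρ))) = E - ε_min - E_min(E), where E_min(E) is the energy-constrained minimum ergotropy and Δ is the dephasing channel in the eigenbasis of H. -/

import Mathlib

/-!
Write the ergotropy as `W(ρ) = E - P(ρ)`, where `P(ρ)` is the passive energy, the least energy
in the unitary orbit of `ρ`; always `P(ρ) ≥ ε_min`. Upper bound: `W(ρ) ≤ E - ε_min`, and the
dephased state `Δ(ρ)` has the same energy `E`, so `W(Δ(ρ)) ≥ E_min(E)`.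
Lower bound: given any `σ` of energy `E`, the pure state `ρ` with real amplitudes `√σ_kk` has
`Δ(ρ) = Δ(σ)`, and a Householder reflection rotates it to the ground state, so `P(ρ) = ε_min`.
Since `Δ(σ)` is the average of the conjugates of `σ` by the powers of a clock matrix, dephasing
can only raise the passive energy, `W(Δ(σ)) ≤ W(σ)`; hence the coherent ergotropy of `ρ` is at
least `E - ε_min - W(σ)`.
-/

open Matrix
open scoped BigOperators ComplexOrder

noncomputable def energy {d : ℕ} (H ρ : Matrix (Fin d) (Fin d) ℂ) : ℝ :=
  (Matrix.trace (ρ * H)).re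

noncomputable def ergotropy {d : ℕ} (H ρ : Matrix (Fin d) (Fin d) ℂ) : ℝ :=
  energy H ρ - ⨅ U : Matrix.unitaryGroup (Fin d) ℂ,
    energy H ((U : Matrix (Fin d) (Fin d) ℂ) * ρ * star (U : Matrix (Fin d) (Fin d) ℂ))

noncomputable def antiErgotropy {d : ℕ} (H ρ : Matrix (Fin d) (Fin d) ℂ) : ℝ :=
  (⨆ U : Matrix.unitaryGroup (Fin d) ℂ,
    energy H ((U : Matrix (Fin d) (Fin d) ℂ) * ρ * star (U : Matrix (Fin d) (Fin d) ℂ))) - energy H ρ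

noncomputable def minErg {d : ℕ} (H : Matrix (Fin d) (Fin d) ℂ) (E : ℝ) : ℝ :=
  sInf {x : ℝ | ∃ ρ : Matrix (Fin d) (Fin d) ℂ,
    ρ.PosSemidef ∧ ρ.trace = 1 ∧ energy H ρ = E ∧ ergotropy H ρ = x}

open Finset

namespace Matrix

section Householder

variable {n 𝕜 : Type*} [Fintype n] [DecidableEq n] [RCLike 𝕜]

def householder (v : n → 𝕜) : Matrix n n 𝕜 :=
  1 - (2 / (star v ⬝ᵥ v)) • vecMulVec v (star v)

theorem star_householder (v : n → 𝕜) : star (householder v) = householder v := by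
  have hv : star (star v ⬝ᵥ v) = star v ⬝ᵥ v := by rw [← star_dotProduct]
  simp [householder, star_eq_conjTranspose, conjTranspose_vecMulVec, hv]

theorem householder_mem_unitaryGroup (v : n → 𝕜) : householder v ∈ unitaryGroup n 𝕜 := by
  rw [mem_unitaryGroup_iff', star_householder]
  by_cases hv : star v ⬝ᵥ v = 0
  · simp [householder, hv]
  have hsq : vecMulVec v (star v) * vecMulVec v (star v)
      = (star v ⬝ᵥ v) • vecMulVec v (star v) := by
    rw [vecMulVec_mul_vecMulVec, vecMulVec_smul]
  have hc : (2 / (star v ⬝ᵥ v)) * ((2 / (star v ⬝ᵥ v)) * (star v ⬝ᵥ v))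
      = 2 / (star v ⬝ᵥ v) + 2 / (star v ⬝ᵥ v) := by
    field_simp; ring
  simp only [householder, sub_mul, mul_sub, one_mul, mul_one, Matrix.smul_mul,
    Matrix.mul_smul, hsq, smul_smul, hc, add_smul]
  abel

theorem householder_sub_mulVec {u w : n → 𝕜} (hnorm : star u ⬝ᵥ u = star w ⬝ᵥ w)
    (hsymm : star u ⬝ᵥ w = star w ⬝ᵥ u) : householder (u - w) *ᵥ u = w := by
  set v := u - w
  have hvv : star v ⬝ᵥ v = 2 * (star v ⬝ᵥ u) := by
    simp only [v, star_sub, sub_dotProduct, dotProduct_sub, hnorm, hsymm]; ring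
  rw [householder, sub_mulVec, one_mulVec, smul_mulVec, vecMulVec_mulVec, op_smul_eq_smul,
    smul_smul]
  by_cases hvu : star v ⬝ᵥ u = 0
  · have hv0 : v = 0 := dotProduct_star_self_eq_zero.mp (by rw [hvv, hvu, mul_zero])
    simp [hv0, sub_eq_zero.mp hv0]
  · have hscalar : 2 / (2 * star v ⬝ᵥ u) * star v ⬝ᵥ u = 1 := by field_simp
    rw [hvv, hscalar, one_smul, sub_sub_cancel]

end Householder

section Clock

variable {d : ℕ}

def clockMatrix (ζ : ℂ) : Matrix (Fin d) (Fin d) ℂ :=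
  diagonal fun j => ζ ^ (j : ℕ)

variable [NeZero d] {ζ : ℂ}

theorem star_clockMatrix (hζ : IsPrimitiveRoot ζ d) :
    star (clockMatrix ζ : Matrix (Fin d) (Fin d) ℂ)
      = diagonal fun j : Fin d => (ζ ^ (j : ℕ))⁻¹ := by
  have hconj : star ζ = ζ⁻¹ := (Complex.inv_eq_conj (hζ.norm'_eq_one (NeZero.ne d))).symm
  simp [clockMatrix, star_eq_conjTranspose, diagonal_conjTranspose, hconj]

theorem clockMatrix_mem_unitaryGroup (hζ : IsPrimitiveRoot ζ d) :
    (clockMatrix ζ : Matrix (Fin d) (Fin d) ℂ) ∈ unitaryGroup (Fin d) ℂ := by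
  rw [mem_unitaryGroup_iff', star_clockMatrix hζ, clockMatrix, diagonal_mul_diagonal]
  simp [hζ.ne_zero (NeZero.ne d)]

theorem clockMatrix_pow_mul_mul_star_apply (hζ : IsPrimitiveRoot ζ d) (m : ℕ)
    (σ : Matrix (Fin d) (Fin d) ℂ) (j k : Fin d) :
    (clockMatrix ζ ^ m * σ * star (clockMatrix ζ ^ m) : Matrix (Fin d) (Fin d) ℂ) j k
      = (ζ ^ (j : ℕ) / ζ ^ (k : ℕ)) ^ m * σ j k := by
  rw [star_pow, star_clockMatrix hζ, clockMatrix, diagonal_pow, diagonal_pow, mul_diagonal,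
    diagonal_mul, Pi.pow_apply, Pi.pow_apply, div_pow, div_eq_mul_inv, inv_pow]
  ring

theorem sum_clockMatrix_pow_conj (hζ : IsPrimitiveRoot ζ d) (σ : Matrix (Fin d) (Fin d) ℂ) :
    ∑ m ∈ range d, clockMatrix ζ ^ m * σ * star (clockMatrix ζ ^ m)
      = (d : ℂ) • diagonal fun i => σ i i := by
  have hζ0 : ζ ≠ 0 := hζ.ne_zero (NeZero.ne d)
  ext j k
  simp only [sum_apply, clockMatrix_pow_mul_mul_star_apply hζ, ← sum_mul, smul_apply,
    smul_eq_mul]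
  by_cases hjk : j = k
  · subst hjk
    simp [hζ0]
  set x := ζ ^ (j : ℕ) / ζ ^ (k : ℕ)
  have hx : x ≠ 1 := fun h => hjk <| Fin.ext <|
    hζ.pow_inj j.isLt k.isLt ((div_eq_one_iff_eq (pow_ne_zero _ hζ0)).mp h)
  have hxd : x ^ d = 1 := by
    rw [div_pow, ← pow_mul, ← pow_mul, mul_comm, pow_mul, hζ.pow_eq_one, mul_comm, pow_mul,
      hζ.pow_eq_one, one_pow, one_pow, div_one]
  have hsum : ∑ m ∈ range d, x ^ m = 0 := by
    have h := mul_neg_geom_sum x d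
    rw [hxd, sub_self] at h
    exact (mul_eq_zero.mp h).resolve_left (sub_ne_zero.mpr (Ne.symm hx))
  simp [hsum, diagonal_apply_ne _ hjk]

end Clock

end Matrix

section Energy

variable {d : ℕ}

theorem energy_diagonal (eps : Fin d → ℝ) (ρ : Matrix (Fin d) (Fin d) ℂ) :
    energy (diagonal fun i => (eps i : ℂ)) ρ = ∑ i, (ρ i i).re * eps i := by
  simp [energy, trace, mul_diagonal, Complex.mul_re]

theorem energy_sum {ι : Type*} (H : Matrix (Fin d) (Fin d) ℂ) (s : Finset ι)
    (f : ι → Matrix (Fin d) (Fin d) ℂ) :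
    energy H (∑ m ∈ s, f m) = ∑ m ∈ s, energy H (f m) := by
  simp [energy, sum_mul, trace_sum, Complex.re_sum]

theorem energy_natCast_smul (H ρ : Matrix (Fin d) (Fin d) ℂ) (k : ℕ) :
    energy H ((k : ℂ) • ρ) = k * energy H ρ := by
  simp [energy, trace_smul, Complex.mul_re]

theorem energy_diagonal_diag (eps : Fin d → ℝ) (ρ : Matrix (Fin d) (Fin d) ℂ) :
    energy (diagonal fun i => (eps i : ℂ)) (diagonal fun i => ρ i i)
      = energy (diagonal fun i => (eps i : ℂ)) ρ := by
  simp [energy_diagonal]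

theorem sum_re_diag_eq_one {ρ : Matrix (Fin d) (Fin d) ℂ} (ht : ρ.trace = 1) :
    ∑ i, (ρ i i).re = 1 := by
  simpa [trace] using congrArg Complex.re ht

theorem ciInf_le_energy (eps : Fin d → ℝ) {ρ : Matrix (Fin d) (Fin d) ℂ} (hρ : ρ.PosSemidef)
    (ht : ρ.trace = 1) : ⨅ i, eps i ≤ energy (diagonal fun i => (eps i : ℂ)) ρ :=
  calc ⨅ i, eps i = ∑ i, (ρ i i).re * ⨅ j, eps j := by
        rw [← sum_mul, sum_re_diag_eq_one ht, one_mul]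
    _ ≤ _ := by
      rw [energy_diagonal]
      gcongr with i
      · exact (Complex.nonneg_iff.mp hρ.diag_nonneg).1
      · exact ciInf_le (Set.finite_range eps).bddBelow i

end Energy

section States

variable {n : Type*} [DecidableEq n]

theorem posSemidef_diagonal_diag {ρ : Matrix n n ℂ} (hρ : ρ.PosSemidef) :
    (diagonal fun i => ρ i i).PosSemidef :=
  posSemidef_diagonal_iff.mpr fun _ => hρ.diag_nonneg

theorem trace_unitary_conj [Fintype n] (ρ : Matrix n n ℂ) (U : unitaryGroup n ℂ) :
    ((U : Matrix n n ℂ) * ρ * star (U : Matrix n n ℂ)).trace = ρ.trace := by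
  rw [trace_mul_cycle, Unitary.star_mul_self_of_mem U.2, one_mul]

end States

section PassiveEnergy

variable {d : ℕ}

noncomputable def passiveEnergy (H ρ : Matrix (Fin d) (Fin d) ℂ) : ℝ :=
  ⨅ U : unitaryGroup (Fin d) ℂ,
    energy H ((U : Matrix (Fin d) (Fin d) ℂ) * ρ * star (U : Matrix (Fin d) (Fin d) ℂ))

theorem ergotropy_eq_energy_sub_passiveEnergy (H ρ : Matrix (Fin d) (Fin d) ℂ) :
    ergotropy H ρ = energy H ρ - passiveEnergy H ρ :=
  rfl

variable (eps : Fin d → ℝ) {ρ : Matrix (Fin d) (Fin d) ℂ}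

theorem ciInf_le_energy_unitary_conj (hρ : ρ.PosSemidef) (ht : ρ.trace = 1)
    (U : unitaryGroup (Fin d) ℂ) :
    ⨅ i, eps i ≤ energy (diagonal fun i => (eps i : ℂ))
      ((U : Matrix (Fin d) (Fin d) ℂ) * ρ * star (U : Matrix (Fin d) (Fin d) ℂ)) :=
  ciInf_le_energy eps (hρ.mul_mul_conjTranspose_same _) ((trace_unitary_conj ρ U).trans ht)

theorem ciInf_le_passiveEnergy (hρ : ρ.PosSemidef) (ht : ρ.trace = 1) :
    ⨅ i, eps i ≤ passiveEnergy (diagonal fun i => (eps i : ℂ)) ρ :=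
  le_ciInf (ciInf_le_energy_unitary_conj eps hρ ht)

theorem passiveEnergy_le_energy_unitary_conj (hρ : ρ.PosSemidef) (ht : ρ.trace = 1)
    (U : unitaryGroup (Fin d) ℂ) :
    passiveEnergy (diagonal fun i => (eps i : ℂ)) ρ ≤ energy (diagonal fun i => (eps i : ℂ))
      ((U : Matrix (Fin d) (Fin d) ℂ) * ρ * star (U : Matrix (Fin d) (Fin d) ℂ)) :=
  ciInf_le ⟨_, Set.forall_mem_range.2 (ciInf_le_energy_unitary_conj eps hρ ht)⟩ U

theorem ergotropy_nonneg (hρ : ρ.PosSemidef) (ht : ρ.trace = 1) :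
    0 ≤ ergotropy (diagonal fun i => (eps i : ℂ)) ρ := by
  simpa [ergotropy_eq_energy_sub_passiveEnergy] using
    passiveEnergy_le_energy_unitary_conj eps hρ ht 1

theorem ergotropy_le_energy_sub_ciInf (hρ : ρ.PosSemidef) (ht : ρ.trace = 1) :
    ergotropy (diagonal fun i => (eps i : ℂ)) ρ
      ≤ energy (diagonal fun i => (eps i : ℂ)) ρ - ⨅ i, eps i :=
  sub_le_sub_left (ciInf_le_passiveEnergy eps hρ ht) _

theorem passiveEnergy_le_passiveEnergy_diagonal_diag [NeZero d] (hρ : ρ.PosSemidef)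
    (ht : ρ.trace = 1) :
    passiveEnergy (diagonal fun i => (eps i : ℂ)) ρ
      ≤ passiveEnergy (diagonal fun i => (eps i : ℂ)) (diagonal fun i => ρ i i) := by
  have hζ := Complex.isPrimitiveRoot_exp d (NeZero.ne d)
  refine le_ciInf fun U => ?_
  let V : ℕ → unitaryGroup (Fin d) ℂ := fun m =>
    U * ⟨clockMatrix _ ^ m, pow_mem (clockMatrix_mem_unitaryGroup hζ) m⟩
  have hsum : (d : ℂ) • ((U : Matrix (Fin d) (Fin d) ℂ) * (diagonal fun i => ρ i i)
        * star (U : Matrix (Fin d) (Fin d) ℂ))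
      = ∑ m ∈ range d,
          (V m : Matrix (Fin d) (Fin d) ℂ) * ρ * star (V m : Matrix (Fin d) (Fin d) ℂ) := by
    rw [← Matrix.smul_mul, ← Matrix.mul_smul, ← sum_clockMatrix_pow_conj hζ, mul_sum, sum_mul]
    refine sum_congr rfl fun m _ => ?_
    simp only [V, Submonoid.coe_mul, star_mul, Matrix.mul_assoc]
  have hd : (0 : ℝ) < d := Nat.cast_pos.2 (NeZero.pos d)
  refine le_of_mul_le_mul_left ?_ hd
  calc (d : ℝ) * passiveEnergy (diagonal fun i => (eps i : ℂ)) ρ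
      = ∑ _m ∈ range d, passiveEnergy (diagonal fun i => (eps i : ℂ)) ρ := by simp
    _ ≤ ∑ m ∈ range d, energy (diagonal fun i => (eps i : ℂ))
          ((V m : Matrix (Fin d) (Fin d) ℂ) * ρ * star (V m : Matrix (Fin d) (Fin d) ℂ)) :=
        sum_le_sum fun m _ => passiveEnergy_le_energy_unitary_conj eps hρ ht (V m)
    _ = _ := by rw [← energy_sum, ← hsum, energy_natCast_smul]

theorem ergotropy_diagonal_diag_le [NeZero d] (hρ : ρ.PosSemidef) (ht : ρ.trace = 1) :
    ergotropy (diagonal fun i => (eps i : ℂ)) (diagonal fun i => ρ i i)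
      ≤ ergotropy (diagonal fun i => (eps i : ℂ)) ρ := by
  rw [ergotropy_eq_energy_sub_passiveEnergy, ergotropy_eq_energy_sub_passiveEnergy,
    energy_diagonal_diag]
  exact sub_le_sub_left (passiveEnergy_le_passiveEnergy_diagonal_diag eps hρ ht) _

end PassiveEnergy

section PureStates

variable {d : ℕ} [NeZero d] (eps : Fin d → ℝ)

theorem passiveEnergy_vecMulVec_star_self {ψ : Fin d → ℂ} (hreal : star ψ = ψ)
    (hnorm : star ψ ⬝ᵥ ψ = 1) :
    passiveEnergy (diagonal fun i => (eps i : ℂ)) (vecMulVec ψ (star ψ)) = ⨅ i, eps i := by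
  have hψ : (vecMulVec ψ (star ψ)).PosSemidef := posSemidef_vecMulVec_self_star ψ
  have ht : (vecMulVec ψ (star ψ)).trace = 1 := by
    rw [trace_vecMulVec, dotProduct_comm, hnorm]
  refine le_antisymm ?_ (ciInf_le_passiveEnergy eps hψ ht)
  obtain ⟨i₀, hi₀⟩ := exists_eq_ciInf_of_finite (f := eps)
  set e : Fin d → ℂ := Pi.single i₀ 1
  have he : star e = e := by simp [e]
  have hU : householder (ψ - e) *ᵥ ψ = e :=
    householder_sub_mulVec (by simp [hnorm, he, e]) (by rw [he, hreal, dotProduct_comm])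
  have hconj : householder (ψ - e) * vecMulVec ψ (star ψ) * star (householder (ψ - e))
      = vecMulVec e (star e) := by
    rw [mul_vecMulVec, vecMulVec_mul, hU, star_eq_conjTranspose, ← star_mulVec, hU]
  calc passiveEnergy (diagonal fun i => (eps i : ℂ)) (vecMulVec ψ (star ψ))
      ≤ energy (diagonal fun i => (eps i : ℂ)) (vecMulVec e (star e)) := by
        rw [← hconj]
        exact passiveEnergy_le_energy_unitary_conj eps hψ ht
          ⟨_, householder_mem_unitaryGroup (ψ - e)⟩
    _ = ⨅ i, eps i := by
        rw [energy_diagonal, ← hi₀,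
          Fintype.sum_eq_single i₀ fun i hi => by simp [he, e, vecMulVec_apply, hi]]
        simp [he, e, vecMulVec_apply]

theorem exists_state_diag_eq_passiveEnergy_eq_ciInf {σ : Matrix (Fin d) (Fin d) ℂ}
    (hσ : σ.PosSemidef) (ht : σ.trace = 1) :
    ∃ ρ : Matrix (Fin d) (Fin d) ℂ, ρ.PosSemidef ∧ ρ.trace = 1 ∧
      (fun i => ρ i i) = (fun i => σ i i) ∧
      passiveEnergy (diagonal fun i => (eps i : ℂ)) ρ = ⨅ i, eps i := by
  set ψ : Fin d → ℂ := fun k => (√(σ k k).re : ℂ)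
  have hreal : star ψ = ψ := by ext k; simp [ψ]
  have hsq : ∀ k, ψ k * star (ψ k) = σ k k := fun k => by
    obtain ⟨hre, him⟩ := Complex.nonneg_iff.mp (hσ.diag_nonneg (i := k))
    apply Complex.ext <;> simp [ψ, Real.mul_self_sqrt hre, ← him]
  have hdiag : (fun i => vecMulVec ψ (star ψ) i i) = fun i => σ i i := by
    ext i; exact hsq i
  have hnorm : star ψ ⬝ᵥ ψ = 1 := by
    rw [← ht, trace, dotProduct_comm]
    exact sum_congr rfl fun i _ => hsq i
  refine ⟨vecMulVec ψ (star ψ), posSemidef_vecMulVec_self_star ψ, ?_, hdiag,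
    passiveEnergy_vecMulVec_star_self eps hreal hnorm⟩
  rw [trace_vecMulVec, dotProduct_comm, hnorm]

end PureStates

theorem exists_state_energy_eq {d : ℕ} [NeZero d] (eps : Fin d → ℝ) {E : ℝ}
    (hE : E ∈ Set.Icc (⨅ i, eps i) (⨆ i, eps i)) :
    ∃ ρ : Matrix (Fin d) (Fin d) ℂ, ρ.PosSemidef ∧ ρ.trace = 1 ∧
      energy (diagonal fun i => (eps i : ℂ)) ρ = E := by
  obtain ⟨i₀, hi₀⟩ := exists_eq_ciInf_of_finite (f := eps)
  obtain ⟨i₁, hi₁⟩ := exists_eq_ciSup_of_finite (f := eps)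
  rw [← hi₀, ← hi₁] at hE
  obtain ⟨hlo, hhi⟩ := hE
  -- mix the ground level `i₀` with the top level `i₁`; if they coincide, `t = 0` by `x / 0 = 0`
  set t := (E - eps i₀) / (eps i₁ - eps i₀)
  have ht0 : 0 ≤ t := div_nonneg (sub_nonneg.2 hlo) (by linarith)
  have ht1 : t ≤ 1 := div_le_one_of_le₀ (by linarith) (by linarith)
  have hEt : eps i₀ + t * (eps i₁ - eps i₀) = E := by
    rcases eq_or_ne (eps i₁) (eps i₀) with h | h
    · simp only [h, sub_self, mul_zero, add_zero]; linarith
    · rw [div_mul_cancel₀ _ (sub_ne_zero.2 h)]; ring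
  set w : Fin d → ℝ := fun i =>
    (1 - t) * (if i = i₀ then 1 else 0) + t * (if i = i₁ then 1 else 0)
  have hw : ∀ i, 0 ≤ w i := fun i => by simp only [w]; split_ifs <;> linarith
  refine ⟨diagonal fun i => (w i : ℂ), posSemidef_diagonal_iff.2 fun i => ?_, ?_, ?_⟩
  · exact Complex.zero_le_real.2 (hw i)
  · have hsum : ∑ i, w i = 1 := by simp [w, sum_add_distrib]
    rw [trace_diagonal, ← Complex.ofReal_sum, hsum, Complex.ofReal_one]
  · rw [← hEt]
    simp [energy_diagonal, w, add_mul, sum_add_distrib]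
    ring

theorem csSup_eq_sub_csInf {A B : Set ℝ} {c : ℝ} (hB : BddBelow B) (hB₀ : B.Nonempty)
    (hAB : ∀ a ∈ A, ∃ b ∈ B, a ≤ c - b) (hBA : ∀ b ∈ B, ∃ a ∈ A, c - b ≤ a) :
    sSup A = c - sInf B := by
  have hle : ∀ a ∈ A, a ≤ c - sInf B := fun a ha => by
    obtain ⟨b, hb, hab⟩ := hAB a ha
    linarith [csInf_le hB hb]
  obtain ⟨a₀, ha₀, -⟩ := hBA _ hB₀.some_mem
  refine le_antisymm (csSup_le ⟨a₀, ha₀⟩ hle) ?_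
  have : c - sSup A ≤ sInf B := le_csInf hB₀ fun b hb => by
    obtain ⟨a, ha, hba⟩ := hBA b hb
    linarith [le_csSup ⟨_, hle⟩ ha]
  linarith

/-- The maximum coherent ergotropy at fixed mean energy E equals
E - ε_min - E_min(E). -/
theorem max_coherent_ergotropy {d : ℕ} [NeZero d] (eps : Fin d → ℝ) (E : ℝ)
    (hE : E ∈ Set.Icc (⨅ i, eps i) (⨆ i, eps i)) :
    sSup {x : ℝ | ∃ ρ : Matrix (Fin d) (Fin d) ℂ, ρ.PosSemidef ∧ ρ.trace = 1 ∧
        energy (Matrix.diagonal fun i => (eps i : ℂ)) ρ = E ∧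
        x = ergotropy (Matrix.diagonal fun i => (eps i : ℂ)) ρ
          - ergotropy (Matrix.diagonal fun i => (eps i : ℂ))
              (Matrix.diagonal fun i => ρ i i)}
      = E - (⨅ i, eps i) - minErg (Matrix.diagonal fun i => (eps i : ℂ)) E := by
  obtain ⟨σ₀, hσ₀, ht₀, hE₀⟩ := exists_state_energy_eq eps hE
  refine csSup_eq_sub_csInf ⟨0, ?_⟩ ⟨_, σ₀, hσ₀, ht₀, hE₀, rfl⟩ ?_ ?_
  · rintro _ ⟨ρ, hρ, ht, -, rfl⟩
    exact ergotropy_nonneg eps hρ ht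
  · rintro _ ⟨ρ, hρ, ht, hEρ, rfl⟩
    refine ⟨_, ⟨_, posSemidef_diagonal_diag hρ, (trace_diagonal _).trans ht,
      (energy_diagonal_diag eps ρ).trans hEρ, rfl⟩, ?_⟩
    linarith [ergotropy_le_energy_sub_ciInf eps hρ ht]
  · rintro _ ⟨σ, hσ, ht, hEσ, rfl⟩
    obtain ⟨ρ, hρ, hρt, hdiag, hpas⟩ := exists_state_diag_eq_passiveEnergy_eq_ciInf eps hσ ht
    have hEρ : energy (diagonal fun i => (eps i : ℂ)) ρ = E := by
      rw [← energy_diagonal_diag, hdiag, energy_diagonal_diag, hEσ]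
    refine ⟨_, ⟨ρ, hρ, hρt, hEρ, rfl⟩, ?_⟩
    rw [ergotropy_eq_energy_sub_passiveEnergy _ ρ, hEρ, hpas, hdiag]
    linarith [ergotropy_diagonal_diag_le eps hσ ht]
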